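/- Let F be a field, let α be a nonzero element of F, let s_1, …, s_m and t_1, …, t_n be positive integers, and set C = J_{s_1}(0) ⊕ ⋯ ⊕ J_{s_m}(0) and A = J_{t_1}(α) ⊕ ⋯ ⊕ J_{t_n}(α) (block diagonal matrices of Jordan blocks). Then C ⊗ A is nilpotent with minimal polynomial X^{(max_i s_i) ∧_α (max_j t_j)}; here max_i s_i and max_j t_j are the indexes of 0 and α as eigenvalues of C and A, respectively. -/
import Mathlib


open Polynomial Matrix
open scoped Kronecker

open scoped Classical in
/-- `wedgeL lam t s` is the operation `t ∧_λ s`: it equals `min t s` if `λ = 0`,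
`t` if `λ ≠ 0` and `s ≠ 0`, and `0` if `λ ≠ 0` and `s = 0`. -/
noncomputable def wedgeL {F : Type*} [Field F] (lam : F) (t s : ℕ) : ℕ :=
  if lam = 0 then min t s else if s = 0 then 0 else t

/-- `jordan F s a` is the `s × s` Jordan block with eigenvalue `a`:
the entry `(i, j)` is `a` if `j = i`, `1` if `j = i + 1`, and `0` otherwise. -/
def jordan (F : Type*) [Field F] (s : ℕ) (a : F) : Matrix (Fin s) (Fin s) F :=
  Matrix.of fun i j => if (j : ℕ) = (i : ℕ) then a else if (j : ℕ) = (i : ℕ) + 1 then 1 else 0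

/-- Entries of powers of a nilpotent Jordan block. -/
lemma jordan_zero_pow_apply (F : Type*) [Field F] (sN k : ℕ) (i j : Fin sN) :
    ((jordan F sN (0 : F)) ^ k) i j = if (j : ℕ) = (i : ℕ) + k then 1 else 0 := by
  induction k generalizing j with
  | zero =>
    simp only [pow_zero, Matrix.one_apply, Nat.add_zero]
    split_ifs with h1 h2 h2 <;> first | rfl | (exfalso; first | exact h2 (by rw [h1]) | exact h1 (Fin.ext h2.symm))
  | succ k ih =>
    rw [pow_succ, Matrix.mul_apply]
    simp only [ih]
    by_cases h : (i : ℕ) + k < sN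
    · rw [Finset.sum_eq_single (⟨(i : ℕ) + k, h⟩ : Fin sN)]
      · simp only [if_pos rfl, one_mul, jordan, Matrix.of_apply]
        split_ifs with h1 h2 h3 h4 <;> simp_all <;> omega
      · intro b _ hb
        rw [if_neg, zero_mul]
        intro hb'
        exact hb (Fin.ext hb')
      · intro hmem; exact absurd (Finset.mem_univ _) hmem
    · rw [if_neg (by omega), Finset.sum_eq_zero]
      intro l _
      rw [if_neg (by omega), zero_mul]

/-- The last diagonal entry of a power of a Jordan block. -/
lemma jordan_pow_last (F : Type*) [Field F] (tN : ℕ) (h : 0 < tN) (a : F) (k : ℕ) :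
    ((jordan F tN a) ^ k) ⟨tN - 1, by omega⟩ ⟨tN - 1, by omega⟩ = a ^ k := by
  induction k with
  | zero => simp [Matrix.one_apply_eq]
  | succ k ih =>
    rw [pow_succ', Matrix.mul_apply]
    rw [Finset.sum_eq_single (⟨tN - 1, by omega⟩ : Fin tN)]
    · rw [ih, jordan, Matrix.of_apply, if_pos rfl, pow_succ']
    · intro b _ hb
      have hb1 : (b : ℕ) ≠ tN - 1 := fun hh => hb (Fin.ext (by simpa using hh))
      have hb2 := b.isLt
      simp only [jordan, Matrix.of_apply, Fin.val_mk]
      rw [if_neg (by omega), if_neg (by omega), zero_mul]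
    · intro hmem; exact absurd (Finset.mem_univ _) hmem

/-- Let `F` be a field, `α` a nonzero element of `F`, `s₁, …, s_m` and `t₁, …, t_n`
positive integers, `C = J_{s₁}(0) ⊕ ⋯ ⊕ J_{s_m}(0)` and `A = J_{t₁}(α) ⊕ ⋯ ⊕ J_{t_n}(α)`.
Then `C ⊗ A` is nilpotent with minimal polynomial `X ^ ((max_i s_i) ∧_α (max_j t_j))`. -/
theorem minpoly_jordanSum_zero_kronecker (F : Type*) [Field F] (α : F) (hα : α ≠ 0)
    (m n : ℕ) (hm : 0 < m) (hn : 0 < n) (s : Fin m → ℕ) (t : Fin n → ℕ)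
    (hs : ∀ i, 0 < s i) (ht : ∀ j, 0 < t j) :
    IsNilpotent ((Matrix.blockDiagonal' (fun i => jordan F (s i) (0 : F))) ⊗ₖ
        (Matrix.blockDiagonal' (fun j => jordan F (t j) α))) ∧
      minpoly F ((Matrix.blockDiagonal' (fun i => jordan F (s i) (0 : F))) ⊗ₖ
        (Matrix.blockDiagonal' (fun j => jordan F (t j) α))) =
      X ^ wedgeL α (Finset.univ.sup s) (Finset.univ.sup t) := by
  classical
  set C := Matrix.blockDiagonal' (fun i => jordan F (s i) (0 : F)) with hC
  set A := Matrix.blockDiagonal' (fun j => jordan F (t j) α) with hA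
  set M := C ⊗ₖ A with hM
  set K := Finset.univ.sup s with hK
  -- K is attained and positive
  obtain ⟨i0, -, hi0⟩ := Finset.exists_mem_eq_sup (Finset.univ : Finset (Fin m))
    (Finset.univ_nonempty_iff.2 ⟨⟨0, hm⟩⟩) s
  have hKpos : 0 < K := by rw [hK, hi0]; exact hs i0
  have htsup : Finset.univ.sup t ≠ 0 := by
    have := Finset.le_sup (f := t) (Finset.mem_univ ⟨0, hn⟩)
    have := ht ⟨0, hn⟩
    omega
  have hwedge : wedgeL α K (Finset.univ.sup t) = K := by
    simp [wedgeL, hα, htsup]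
  -- powers of the Kronecker product
  have hpow : ∀ k : ℕ, M ^ k = (C ^ k) ⊗ₖ (A ^ k) := by
    intro k
    induction k with
    | zero => simp [Matrix.one_kronecker_one]
    | succ k ih => rw [pow_succ, pow_succ, pow_succ, ih, hM, Matrix.mul_kronecker_mul]
  -- C ^ K = 0
  have hCK : C ^ K = 0 := by
    rw [hC, ← Matrix.blockDiagonal'_pow]
    have : ((fun i => jordan F (s i) (0 : F)) ^ K) = fun i => (0 : Matrix (Fin (s i)) (Fin (s i)) F) := by
      funext i
      ext a b
      rw [Pi.pow_apply, jordan_zero_pow_apply]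
      have hb := b.isLt
      have : s i ≤ K := Finset.le_sup (Finset.mem_univ i)
      rw [if_neg (by omega)]
      rfl
    rw [this]; exact Matrix.blockDiagonal'_zero
  have hMK : M ^ K = 0 := by rw [hpow, hCK, Matrix.zero_kronecker]
  have hnil : IsNilpotent M := ⟨K, hMK⟩
  -- M ^ (K - 1) ≠ 0
  have hMK1 : M ^ (K - 1) ≠ 0 := by
    intro h0
    have hsi0 : 0 < s i0 := hs i0
    have hKsi : K = s i0 := hi0
    set j0 : Fin n := ⟨0, hn⟩
    have htj0 : 0 < t j0 := ht j0
    have hentry : (M ^ (K - 1)) (⟨i0, ⟨0, hsi0⟩⟩, ⟨j0, ⟨t j0 - 1, by omega⟩⟩)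
        (⟨i0, ⟨K - 1, by omega⟩⟩, ⟨j0, ⟨t j0 - 1, by omega⟩⟩) = α ^ (K - 1) := by
      rw [hpow, Matrix.kronecker_apply, hC, hA, ← Matrix.blockDiagonal'_pow,
        ← Matrix.blockDiagonal'_pow, Matrix.blockDiagonal'_apply_eq,
        Matrix.blockDiagonal'_apply_eq]
      simp only [Pi.pow_apply]
      rw [jordan_zero_pow_apply, jordan_pow_last]
      rw [if_pos (by simp [hKsi])]
      · ring
      · exact htj0
    rw [h0] at hentry
    simp only [Matrix.zero_apply] at hentry
    exact pow_ne_zero _ hα hentry.symm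
  -- minimal polynomial
  have hint : IsIntegral F M := ⟨X ^ K, monic_X_pow K, by simp [hMK]⟩
  have hdvd : minpoly F M ∣ X ^ K := minpoly.dvd F M (by simp [hMK])
  obtain ⟨e, heK, hassoc⟩ := (dvd_prime_pow Polynomial.prime_X K).mp hdvd
  have hmin : minpoly F M = X ^ e :=
    Polynomial.eq_of_monic_of_associated (minpoly.monic hint) (monic_X_pow e) hassoc
  have hMe : M ^ e = 0 := by
    have := minpoly.aeval F M
    rw [hmin] at this
    simpa using this
  have heq : e = K := by
    by_contra hne
    have helt : e ≤ K - 1 := by omega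
    have : M ^ (K - 1) = 0 := by
      have : M ^ (K - 1) = M ^ e * M ^ (K - 1 - e) := by
        rw [← pow_add]; congr 1; omega
      rw [this, hMe, zero_mul]
    exact hMK1 this
  refine ⟨hnil, ?_⟩
  rw [hmin, heq, hwedge]
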